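/- Let Ω_0 := ℝ×ω ⊆ ℝ^d be the straight tube. Then λ∞(Ω_0) = λ1(ω), where λ∞(Ω_0) := sup over compact sets K ⊆ Ω_0 of λ1(Ω_0\K): the essential spectral threshold of the straight tube equals the spectral threshold of its cross-section. -/

import Mathlib

/-!
For a test function `u` on the tube, every slice `u (s, ·)` is a test function on `ω` whose
gradient is the transverse part of `∇u`; integrating the slice inequalities
`λ₁(ω) ∫ |u (s, ·)|^p ≤ ∫ |∇u (s, ·)|^p` over `s` gives `λ₁(ω) ≤ λ₁(Ω₀)`, the term `K = ∅` of the
supremum.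

Conversely, given a compact `K` and a test function `v` on `ω`, test `λ₁(Ω₀ \ K)` with
`χ(s) v(t)`, where `χ` is a bump placed beyond `K` and stretched by a factor `1/a`, which
multiplies its Rayleigh quotient `R(χ)` by `a^p`. The elementary bound
`(α + β)^q ≤ (1 + 1/η)^q α^q + (1 + η)^q β^q` splits the Rayleigh quotient of `χ ⊗ v` into at most
`(1 + 1/η)^(p/2) a^p R(χ) + (1 + η)^(p/2) R(v)`; letting `a → 0` and then `η → 0` leaves `R(v)`.
-/

open MeasureTheory Set Filter

noncomputable section

abbrev E (m : ℕ) := EuclideanSpace ℝ (Fin m)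

/-- The spectral threshold `λ₁(Ω)` of an open set `Ω ⊆ ℝ^m`: the infimum of the
Rayleigh quotient `(∫_Ω |∇u|^p)/(∫_Ω |u|^p)` over nonzero smooth compactly
supported functions `u` with support in `Ω`. -/
def lam1 (p : ℝ) {m : ℕ} (Ω : Set (E m)) : ℝ :=
  sInf {r : ℝ | ∃ u : E m → ℝ, ContDiff ℝ (⊤ : ℕ∞) u ∧ HasCompactSupport u ∧
    tsupport u ⊆ Ω ∧ u ≠ 0 ∧
    r = (∫ x in Ω, ‖fderiv ℝ u x‖ ^ p) / (∫ x in Ω, |u x| ^ p)}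

/-- The straight tube `ℝ × ω`. -/
def tube {m : ℕ} (ω : Set (E m)) : Set (ℝ × E m) := Set.univ ×ˢ ω

/-- Longitudinal partial derivative `∂_s ψ`. -/
def dS {m : ℕ} (ψ : ℝ × E m → ℝ) (x : ℝ × E m) : ℝ := fderiv ℝ ψ x (1, 0)

/-- Transverse partial derivative `∂_{t_μ} ψ`. -/
def dT {m : ℕ} (ψ : ℝ × E m → ℝ) (x : ℝ × E m) (μ : Fin m) : ℝ :=
  fderiv ℝ ψ x (0, EuclideanSpace.single μ 1)

/-- `|∇u|^p` (Euclidean norm of the full gradient, to the power `p`) on `ℝ × ℝ^m`. -/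
def gradP (p : ℝ) {m : ℕ} (u : ℝ × E m → ℝ) (x : ℝ × E m) : ℝ :=
  (dS u x ^ 2 + ∑ μ, dT u x μ ^ 2) ^ (p / 2)

/-- The spectral threshold `λ₁(Ω)` of an open subset of the product space `ℝ × ℝ^m`. -/
def lam1Prod (p : ℝ) {m : ℕ} (Ω : Set (ℝ × E m)) : ℝ :=
  sInf {r : ℝ | ∃ u : ℝ × E m → ℝ, ContDiff ℝ (⊤ : ℕ∞) u ∧ HasCompactSupport u ∧
    tsupport u ⊆ Ω ∧ u ≠ 0 ∧
    r = (∫ x in Ω, gradP p u x) / (∫ x in Ω, |u x| ^ p)}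


open Topology

theorem add_rpow_le_weighted {q η a b : ℝ} (hq : 0 ≤ q) (hη : 0 < η) (ha : 0 ≤ a) (hb : 0 ≤ b) :
    (a + b) ^ q ≤ (1 + 1 / η) ^ q * a ^ q + (1 + η) ^ q * b ^ q := by
  rcases le_total a (η * b) with h | h
  · calc (a + b) ^ q ≤ ((1 + η) * b) ^ q := by gcongr; linarith
      _ = (1 + η) ^ q * b ^ q := Real.mul_rpow (by positivity) hb
      _ ≤ _ := le_add_of_nonneg_left (by positivity)
  · have hba : b ≤ a / η := (le_div_iff₀ hη).2 (by linarith)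
    calc (a + b) ^ q ≤ ((1 + 1 / η) * a) ^ q := by
          gcongr
          calc a + b ≤ a + a / η := by gcongr
            _ = (1 + 1 / η) * a := by ring
      _ = (1 + 1 / η) ^ q * a ^ q := Real.mul_rpow (by positivity) ha
      _ ≤ _ := le_add_of_nonneg_right (by positivity)

theorem sq_rpow_half_eq_abs_rpow (x p : ℝ) : (x ^ 2) ^ (p / 2) = |x| ^ p := by
  rw [Real.rpow_div_two_eq_sqrt _ (sq_nonneg x), Real.sqrt_sq_eq_abs]

section Support

variable {X Y M : Type*} [TopologicalSpace X] [TopologicalSpace Y]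

theorem abs_rpow_eq_zero_of_notMem_tsupport {p : ℝ} (hp : p ≠ 0) {u : X → ℝ} {x : X}
    (hx : x ∉ tsupport u) : |u x| ^ p = 0 := by
  rw [image_eq_zero_of_notMem_tsupport hx, abs_zero, Real.zero_rpow hp]

theorem tsupport_mul_prod_subset [MulZeroClass M] (f : X → M) (g : Y → M) :
    tsupport (fun z : X × Y => f z.1 * g z.2) ⊆ tsupport f ×ˢ tsupport g :=
  closure_minimal
    (fun _ hz => ⟨subset_tsupport f (left_ne_zero_of_mul hz),
      subset_tsupport g (right_ne_zero_of_mul hz)⟩)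
    ((isClosed_tsupport f).prod (isClosed_tsupport g))

theorem HasCompactSupport.mul_prod [MulZeroClass M] {f : X → M} {g : Y → M}
    (hf : HasCompactSupport f) (hg : HasCompactSupport g) :
    HasCompactSupport (fun z : X × Y => f z.1 * g z.2) :=
  (hf.isCompact.prod hg.isCompact).of_isClosed_subset (isClosed_tsupport _)
    (tsupport_mul_prod_subset f g)

theorem HasCompactSupport.comp_prodMk [T1Space X] [Zero M] {f : X × Y → M}
    (hf : HasCompactSupport f) (x : X) : HasCompactSupport (fun y => f (x, y)) :=
  hf.comp_isClosedEmbedding (.of_continuous_injective_isClosedMap (.prodMk_right x)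
    (Prod.mk_right_injective x) (isClosedMap_prodMk_left x))

theorem tsupport_comp_prodMk_subset [Zero M] {f : X × Y → M} {s : Set Y}
    (hf : tsupport f ⊆ univ ×ˢ s) (x : X) : tsupport (fun y => f (x, y)) ⊆ s :=
  fun _ hy => (hf (tsupport_comp_subset_preimage f (.prodMk_right x) hy)).2

theorem setIntegral_eq_integral_of_tsupport_subset [Zero M] [MeasurableSpace X] {μ : Measure X}
    {u : X → M} {F : X → ℝ} {Ω : Set X} (hF : ∀ x, x ∉ tsupport u → F x = 0)
    (hsupp : tsupport u ⊆ Ω) : ∫ x in Ω, F x ∂μ = ∫ x, F x ∂μ :=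
  setIntegral_eq_integral_of_forall_compl_eq_zero fun x hx => hF x fun h => hx (hsupp h)

end Support

section Integrability

variable {X : Type*} [TopologicalSpace X] [MeasurableSpace X] [OpensMeasurableSpace X]
  {μ : Measure X} [IsFiniteMeasureOnCompacts μ] {p : ℝ} {u : X → ℝ}

theorem HasCompactSupport.integrable_abs_rpow (hcs : HasCompactSupport u) (hu : Continuous u)
    (hp : 0 < p) : Integrable (fun x => |u x| ^ p) μ :=
  ((continuous_abs.comp hu).rpow_const fun _ => Or.inr hp.le).integrable_of_hasCompactSupport
    (hcs.comp_left (g := fun y => |y| ^ p) (by simp [Real.zero_rpow hp.ne']))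

theorem integral_abs_rpow_pos [μ.IsOpenPosMeasure] (hcs : HasCompactSupport u) (hu : Continuous u)
    (hne : u ≠ 0) (hp : 0 < p) : 0 < ∫ x, |u x| ^ p ∂μ := by
  obtain ⟨x, hx⟩ := Function.ne_iff.1 hne
  exact ((continuous_abs.comp hu).rpow_const fun _ => Or.inr hp.le
    ).integral_pos_of_hasCompactSupport_nonneg_nonzero
    (hcs.comp_left (g := fun y => |y| ^ p) (by simp [Real.zero_rpow hp.ne']))
    (fun y => Real.rpow_nonneg (abs_nonneg (u y)) p) (Real.rpow_pos_of_pos (abs_pos.2 hx) p).ne'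

end Integrability

theorem HasCompactSupport.integrable_norm_fderiv_rpow {X : Type*} [NormedAddCommGroup X]
    [NormedSpace ℝ X] [MeasurableSpace X] [OpensMeasurableSpace X] {μ : Measure X}
    [IsFiniteMeasureOnCompacts μ] {p : ℝ} {u : X → ℝ} (hcs : HasCompactSupport u)
    (hu : ContDiff ℝ 1 u) (hp : 0 < p) : Integrable (fun x => ‖fderiv ℝ u x‖ ^ p) μ :=
  ((hu.continuous_fderiv one_ne_zero).norm.rpow_const fun _ => Or.inr hp.le
    ).integrable_of_hasCompactSupport
    ((hcs.fderiv (𝕜 := ℝ)).comp_left (g := fun L => ‖L‖ ^ p) (by simp [Real.zero_rpow hp.ne']))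

theorem norm_fderiv_rpow_eq_zero_of_notMem_tsupport {X : Type*} [NormedAddCommGroup X]
    [NormedSpace ℝ X] {p : ℝ} (hp : p ≠ 0) {u : X → ℝ} {x : X} (hx : x ∉ tsupport u) :
    ‖fderiv ℝ u x‖ ^ p = 0 := by
  rw [fderiv_of_notMem_tsupport ℝ hx, norm_zero, Real.zero_rpow hp]

section Rayleigh

variable {X : Type*} [NormedAddCommGroup X] [NormedSpace ℝ X] [MeasureSpace X]

/-- `lam1` and `lam1Prod` are definitionally `infRayleigh p N` with the energy densities
`N u x = ‖fderiv ℝ u x‖ ^ p` and `N u x = gradP p u x`. -/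
def infRayleigh (p : ℝ) (N : (X → ℝ) → X → ℝ) (Ω : Set X) : ℝ :=
  sInf {r : ℝ | ∃ u : X → ℝ, ContDiff ℝ (⊤ : ℕ∞) u ∧ HasCompactSupport u ∧
    tsupport u ⊆ Ω ∧ u ≠ 0 ∧
    r = (∫ x in Ω, N u x) / (∫ x in Ω, |u x| ^ p)}

def rayleigh (p : ℝ) (u : X → ℝ) : ℝ := (∫ x, ‖fderiv ℝ u x‖ ^ p) / ∫ x, |u x| ^ p

variable {p : ℝ} {N : (X → ℝ) → X → ℝ} {Ω : Set X} {u : X → ℝ}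

theorem infRayleigh_le (hp : p ≠ 0) (hN0 : ∀ u x, 0 ≤ N u x)
    (hN : ∀ u x, x ∉ tsupport u → N u x = 0) (hu : ContDiff ℝ (⊤ : ℕ∞) u)
    (hcs : HasCompactSupport u) (hsupp : tsupport u ⊆ Ω) (hne : u ≠ 0) :
    infRayleigh p N Ω ≤ (∫ x, N u x) / ∫ x, |u x| ^ p := by
  rw [← setIntegral_eq_integral_of_tsupport_subset (hN u) hsupp,
    ← setIntegral_eq_integral_of_tsupport_subset
      (fun _ => abs_rpow_eq_zero_of_notMem_tsupport hp) hsupp]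
  refine csInf_le ⟨0, ?_⟩ ⟨u, hu, hcs, hsupp, hne, rfl⟩
  rintro r ⟨w, -, -, -, -, rfl⟩
  exact div_nonneg (integral_nonneg (hN0 w)) (integral_nonneg fun x => by positivity)

theorem infRayleigh_mul_integral_le (hp : p ≠ 0) (hN0 : ∀ u x, 0 ≤ N u x)
    (hN : ∀ u x, x ∉ tsupport u → N u x = 0) (hu : ContDiff ℝ (⊤ : ℕ∞) u)
    (hcs : HasCompactSupport u) (hsupp : tsupport u ⊆ Ω) :
    infRayleigh p N Ω * ∫ x, |u x| ^ p ≤ ∫ x, N u x := by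
  rcases eq_or_ne u 0 with rfl | hne
  · simpa [Real.zero_rpow hp] using integral_nonneg (hN0 0)
  · exact mul_le_of_le_div₀ (integral_nonneg (hN0 u)) (integral_nonneg fun x => by positivity)
      (infRayleigh_le hp hN0 hN hu hcs hsupp hne)

theorem le_infRayleigh [FiniteDimensional ℝ X] {c : ℝ} (hp : p ≠ 0)
    (hN : ∀ u x, x ∉ tsupport u → N u x = 0) (hΩ : IsOpen Ω) (hΩne : Ω.Nonempty)
    (h : ∀ u : X → ℝ, ContDiff ℝ (⊤ : ℕ∞) u → HasCompactSupport u → tsupport u ⊆ Ω → u ≠ 0 →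
      c ≤ (∫ x, N u x) / ∫ x, |u x| ^ p) :
    c ≤ infRayleigh p N Ω := by
  obtain ⟨x, hx⟩ := hΩne
  obtain ⟨u, hsupp, hcs, hu, -, hux⟩ := exists_contDiff_tsupport_subset (n := ⊤) (hΩ.mem_nhds hx)
  refine le_csInf ⟨_, u, hu, hcs, hsupp, Function.ne_iff.2 ⟨x, by simp [hux]⟩, rfl⟩ ?_
  rintro r ⟨w, hw, hwcs, hwsupp, hwne, rfl⟩
  rw [setIntegral_eq_integral_of_tsupport_subset (hN w) hwsupp,
    setIntegral_eq_integral_of_tsupport_subset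
      (fun _ => abs_rpow_eq_zero_of_notMem_tsupport hp) hwsupp]
  exact h w hw hwcs hwsupp hwne

end Rayleigh

section PartialDerivatives

variable {X Y F : Type*} [NormedAddCommGroup X] [NormedSpace ℝ X] [NormedAddCommGroup Y]
  [NormedSpace ℝ Y] [NormedAddCommGroup F] [NormedSpace ℝ F] {u : X × Y → F} {x : X} {y : Y}

theorem fderiv_comp_prodMk_left (hu : DifferentiableAt ℝ u (x, y)) :
    fderiv ℝ (fun x' => u (x', y)) x = (fderiv ℝ u (x, y)).comp (ContinuousLinearMap.inl ℝ X Y) :=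
  (hu.hasFDerivAt.comp x (hasFDerivAt_prodMk_left x y)).fderiv

theorem fderiv_comp_prodMk_right (hu : DifferentiableAt ℝ u (x, y)) :
    fderiv ℝ (fun y' => u (x, y')) y = (fderiv ℝ u (x, y)).comp (ContinuousLinearMap.inr ℝ X Y) :=
  (hu.hasFDerivAt.comp y (hasFDerivAt_prodMk_right x y)).fderiv

end PartialDerivatives

theorem norm_sq_eq_sum_apply_single_sq {m : ℕ} (L : E m →L[ℝ] ℝ) :
    ‖L‖ ^ 2 = ∑ μ, L (EuclideanSpace.single μ 1) ^ 2 := by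
  obtain ⟨w, rfl⟩ := (InnerProductSpace.toDual ℝ (E m)).surjective L
  rw [LinearIsometryEquiv.norm_map, EuclideanSpace.norm_eq, Real.sq_sqrt (by positivity)]
  simp [EuclideanSpace.inner_single_right]

section Gradient

variable {m : ℕ} {p : ℝ} {u : ℝ × E m → ℝ} {s : ℝ} {t : E m}

theorem gradP_eq (hu : DifferentiableAt ℝ u (s, t)) :
    gradP p u (s, t) =
      (deriv (fun s' => u (s', t)) s ^ 2 + ‖fderiv ℝ (fun t' => u (s, t')) t‖ ^ 2) ^ (p / 2) := by
  rw [gradP, dS, norm_sq_eq_sum_apply_single_sq, fderiv_comp_prodMk_right hu, deriv,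
    fderiv_comp_prodMk_left hu]
  rfl

theorem gradP_nonneg (u : ℝ × E m → ℝ) (x : ℝ × E m) : 0 ≤ gradP p u x := by
  unfold gradP
  positivity

theorem gradP_eq_zero_of_notMem_tsupport (hp : p ≠ 0) {x : ℝ × E m} (hx : x ∉ tsupport u) :
    gradP p u x = 0 := by
  simp [gradP, dS, dT, fderiv_of_notMem_tsupport ℝ hx, Real.zero_rpow (div_ne_zero hp two_ne_zero)]

theorem continuous_gradP (hp : 0 ≤ p) (hu : ContDiff ℝ 1 u) : Continuous (gradP p u) := by
  have hd := hu.continuous_fderiv one_ne_zero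
  exact (((hd.clm_apply continuous_const).pow 2).add (continuous_finsetSum _ fun μ _ =>
    (hd.clm_apply continuous_const).pow 2)).rpow_const fun _ => Or.inr (by positivity)

theorem hasCompactSupport_gradP (hcs : HasCompactSupport u) (hp : p ≠ 0) :
    HasCompactSupport (gradP p u) :=
  .intro hcs fun _ hx => gradP_eq_zero_of_notMem_tsupport hp hx

theorem HasCompactSupport.integrable_gradP {μ : Measure (ℝ × E m)} [IsFiniteMeasureOnCompacts μ]
    (hcs : HasCompactSupport u) (hu : ContDiff ℝ 1 u) (hp : 0 < p) : Integrable (gradP p u) μ :=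
  (continuous_gradP hp.le hu).integrable_of_hasCompactSupport (hasCompactSupport_gradP hcs hp.ne')

theorem norm_fderiv_slice_rpow_le_gradP (hp : 0 ≤ p) (hu : DifferentiableAt ℝ u (s, t)) :
    ‖fderiv ℝ (fun t' => u (s, t')) t‖ ^ p ≤ gradP p u (s, t) := by
  rw [gradP_eq hu]
  calc ‖fderiv ℝ (fun t' => u (s, t')) t‖ ^ p
      = (‖fderiv ℝ (fun t' => u (s, t')) t‖ ^ 2) ^ (p / 2) := by
        rw [sq_rpow_half_eq_abs_rpow, abs_norm]
    _ ≤ _ := by gcongr; exact le_add_of_nonneg_left (sq_nonneg _)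

theorem gradP_mul_le (hp : 0 ≤ p) {η : ℝ} (hη : 0 < η) {χ : ℝ → ℝ} {v : E m → ℝ}
    (hχ : DifferentiableAt ℝ χ s) (hv : DifferentiableAt ℝ v t) :
    gradP p (fun x => χ x.1 * v x.2) (s, t) ≤
      (1 + 1 / η) ^ (p / 2) * (‖fderiv ℝ χ s‖ ^ p * |v t| ^ p) +
        (1 + η) ^ (p / 2) * (|χ s| ^ p * ‖fderiv ℝ v t‖ ^ p) := by
  have hu : DifferentiableAt ℝ (fun x : ℝ × E m => χ x.1 * v x.2) (s, t) :=
    (hχ.comp _ differentiableAt_fst).mul (hv.comp _ differentiableAt_snd)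
  rw [gradP_eq hu]
  simp only [deriv_mul_const hχ, fderiv_const_mul hv, norm_smul]
  have := add_rpow_le_weighted (by positivity) hη (sq_nonneg (deriv χ s * v t))
    (sq_nonneg (‖χ s‖ * ‖fderiv ℝ v t‖)) (q := p / 2)
  rw [sq_rpow_half_eq_abs_rpow, sq_rpow_half_eq_abs_rpow, abs_mul, abs_mul,
    Real.mul_rpow (abs_nonneg _) (abs_nonneg _), Real.mul_rpow (abs_nonneg _) (abs_nonneg _),
    abs_norm, abs_norm, ← Real.norm_eq_abs (deriv χ s), norm_deriv_eq_norm_fderiv] at this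
  simpa only [Real.norm_eq_abs] using this

end Gradient

section Thresholds

variable {m : ℕ} {p : ℝ}

theorem lam1_mul_integral_le (hp : 0 < p) {Ω : Set (E m)} {v : E m → ℝ}
    (hv : ContDiff ℝ (⊤ : ℕ∞) v) (hcs : HasCompactSupport v) (hsupp : tsupport v ⊆ Ω) :
    lam1 p Ω * ∫ t, |v t| ^ p ≤ ∫ t, ‖fderiv ℝ v t‖ ^ p :=
  infRayleigh_mul_integral_le hp.ne' (fun _ _ => by positivity)
    (fun _ _ => norm_fderiv_rpow_eq_zero_of_notMem_tsupport hp.ne') hv hcs hsupp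

theorem le_lam1 (hp : 0 < p) {Ω : Set (E m)} (hΩ : IsOpen Ω) (hΩne : Ω.Nonempty) {c : ℝ}
    (h : ∀ v : E m → ℝ, ContDiff ℝ (⊤ : ℕ∞) v → HasCompactSupport v → tsupport v ⊆ Ω → v ≠ 0 →
      c ≤ rayleigh p v) :
    c ≤ lam1 p Ω :=
  le_infRayleigh hp.ne' (fun _ _ => norm_fderiv_rpow_eq_zero_of_notMem_tsupport hp.ne') hΩ hΩne h

theorem lam1Prod_le (hp : 0 < p) {Ω : Set (ℝ × E m)} {u : ℝ × E m → ℝ}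
    (hu : ContDiff ℝ (⊤ : ℕ∞) u) (hcs : HasCompactSupport u) (hsupp : tsupport u ⊆ Ω)
    (hne : u ≠ 0) :
    lam1Prod p Ω ≤ (∫ x, gradP p u x) / ∫ x, |u x| ^ p :=
  infRayleigh_le hp.ne' gradP_nonneg (fun _ _ => gradP_eq_zero_of_notMem_tsupport hp.ne')
    hu hcs hsupp hne

theorem le_lam1Prod (hp : 0 < p) {Ω : Set (ℝ × E m)} (hΩ : IsOpen Ω) (hΩne : Ω.Nonempty) {c : ℝ}
    (h : ∀ u : ℝ × E m → ℝ, ContDiff ℝ (⊤ : ℕ∞) u → HasCompactSupport u → tsupport u ⊆ Ω →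
      u ≠ 0 → c ≤ (∫ x, gradP p u x) / ∫ x, |u x| ^ p) :
    c ≤ lam1Prod p Ω :=
  le_infRayleigh hp.ne' (fun _ _ => gradP_eq_zero_of_notMem_tsupport hp.ne') hΩ hΩne h

end Thresholds

theorem integral_abs_rpow_mul_prod {X Y : Type*} [MeasureSpace X] [MeasureSpace Y]
    [SFinite (volume : Measure X)] [SFinite (volume : Measure Y)] (p : ℝ) (f : X → ℝ)
    (g : Y → ℝ) :
    ∫ z : X × Y, |f z.1 * g z.2| ^ p = (∫ x, |f x| ^ p) * ∫ y, |g y| ^ p := by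
  simp_rw [abs_mul, Real.mul_rpow (abs_nonneg _) (abs_nonneg _)]
  rw [Measure.volume_eq_prod]
  exact integral_prod_mul (fun x => |f x| ^ p) (fun y => |g y| ^ p)

theorem integral_comp_mul_sub (g : ℝ → ℝ) (a b : ℝ) :
    ∫ s, g (a * (s - b)) = |a⁻¹| * ∫ s, g s := by
  rw [integral_sub_right_eq_self (fun s => g (a * s)) b, Measure.integral_comp_mul_left,
    smul_eq_mul]

theorem rayleigh_comp_mul_sub {χ : ℝ → ℝ} (hχ : Differentiable ℝ χ) {a : ℝ} (ha : a ≠ 0)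
    (b p : ℝ) : rayleigh p (fun s => χ (a * (s - b))) = |a| ^ p * rayleigh p χ := by
  have hderiv (s : ℝ) : ‖fderiv ℝ (fun s => χ (a * (s - b))) s‖ ^ p =
      |a| ^ p * ‖fderiv ℝ χ (a * (s - b))‖ ^ p := by
    have h : HasDerivAt (fun s => χ (a * (s - b))) (deriv χ (a * (s - b)) * (a * 1)) s :=
      (hχ _).hasDerivAt.comp s (((hasDerivAt_id' s).sub_const b).const_mul a)
    rw [← norm_deriv_eq_norm_fderiv, h.deriv, mul_one, ← norm_deriv_eq_norm_fderiv, norm_mul,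
      Real.mul_rpow (norm_nonneg _) (norm_nonneg _), mul_comm]
    simp
  have hN := integral_comp_mul_sub (fun s => ‖fderiv ℝ χ s‖ ^ p) a b
  have hD := integral_comp_mul_sub (fun s => |χ s| ^ p) a b
  simp only [rayleigh, hderiv, integral_const_mul] at hN hD ⊢
  rw [hN, hD, mul_left_comm, mul_div_mul_left _ _ (by positivity), mul_div_assoc]

theorem exists_tsupport_subset_Ioi_rayleigh_le {p : ℝ} (hp : 0 < p) (R : ℝ) {ε : ℝ}
    (hε : 0 < ε) :
    ∃ χ : ℝ → ℝ, ContDiff ℝ (⊤ : ℕ∞) χ ∧ HasCompactSupport χ ∧ tsupport χ ⊆ Ioi R ∧ χ ≠ 0 ∧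
      rayleigh p χ ≤ ε := by
  obtain ⟨χ, hχsupp, hχcs, hχ, -, hχ1⟩ :=
    exists_contDiff_tsupport_subset (n := ⊤) (Ioi_mem_nhds (zero_lt_one' ℝ))
  have hsmall : Tendsto (fun a : ℝ => |a| ^ p * rayleigh p χ) (𝓝[>] 0) (𝓝 0) :=
    (((continuous_abs.rpow_const fun _ => Or.inr hp.le).mul continuous_const).tendsto' 0 0
      (by simp [Real.zero_rpow hp.ne'])).mono_left nhdsWithin_le_nhds
  obtain ⟨a, haε, ha⟩ := ((hsmall.eventually (ge_mem_nhds hε)).and self_mem_nhdsWithin).exists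
  refine ⟨fun s => χ (a * (s - R)), hχ.comp (contDiff_const.mul (contDiff_id.sub contDiff_const)),
    (hχcs.comp_smul (ne_of_gt ha)).comp_homeomorph (Homeomorph.subRight R), fun s hs => ?_,
    Function.ne_iff.2 ⟨R + a⁻¹, by simp [ne_of_gt ha, hχ1]⟩, ?_⟩
  · have := hχsupp (tsupport_comp_subset_preimage χ (f := fun s => a * (s - R)) (by fun_prop) hs)
    exact sub_pos.1 (pos_of_mul_pos_right this (le_of_lt ha))
  · rwa [rayleigh_comp_mul_sub (hχ.differentiable (by simp)) (ne_of_gt ha)]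

section Tensor

variable {m : ℕ} {p η : ℝ} {χ : ℝ → ℝ} {v : E m → ℝ}

theorem integral_gradP_mul_le (hp : 0 < p) (hη : 0 < η) (hχ : ContDiff ℝ 1 χ)
    (hχcs : HasCompactSupport χ) (hv : ContDiff ℝ 1 v) (hvcs : HasCompactSupport v) :
    ∫ x, gradP p (fun x : ℝ × E m => χ x.1 * v x.2) x ≤
      (1 + 1 / η) ^ (p / 2) * ((∫ s, ‖fderiv ℝ χ s‖ ^ p) * ∫ t, |v t| ^ p) +
        (1 + η) ^ (p / 2) * ((∫ s, |χ s| ^ p) * ∫ t, ‖fderiv ℝ v t‖ ^ p) := by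
  have hu : ContDiff ℝ 1 (fun x : ℝ × E m => χ x.1 * v x.2) :=
    (hχ.comp contDiff_fst).mul (hv.comp contDiff_snd)
  have h₁ := (hχcs.integrable_norm_fderiv_rpow hχ hp (μ := volume)).mul_prod
    (hvcs.integrable_abs_rpow hv.continuous hp (μ := volume))
  have h₂ := (hχcs.integrable_abs_rpow hχ.continuous hp (μ := volume)).mul_prod
    (hvcs.integrable_norm_fderiv_rpow hv hp (μ := volume))
  rw [Measure.volume_eq_prod, ← integral_prod_mul, ← integral_prod_mul, ← integral_const_mul,
    ← integral_const_mul, ← integral_add (h₁.const_mul _) (h₂.const_mul _)]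
  exact integral_mono ((hχcs.mul_prod hvcs).integrable_gradP hu hp)
    ((h₁.const_mul _).add (h₂.const_mul _))
    fun _ => gradP_mul_le hp.le hη (hχ.differentiable one_ne_zero _)
      (hv.differentiable one_ne_zero _)

theorem integral_gradP_mul_div_le (hp : 0 < p) (hη : 0 < η) (hχ : ContDiff ℝ 1 χ)
    (hχcs : HasCompactSupport χ) (hχ0 : χ ≠ 0) (hv : ContDiff ℝ 1 v)
    (hvcs : HasCompactSupport v) (hv0 : v ≠ 0) :
    (∫ x, gradP p (fun x : ℝ × E m => χ x.1 * v x.2) x) / ∫ x : ℝ × E m, |χ x.1 * v x.2| ^ p ≤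
      (1 + 1 / η) ^ (p / 2) * rayleigh p χ + (1 + η) ^ (p / 2) * rayleigh p v := by
  have hI := integral_abs_rpow_pos hχcs hχ.continuous hχ0 hp (μ := volume)
  have hD := integral_abs_rpow_pos hvcs hv.continuous hv0 hp (μ := volume)
  rw [integral_abs_rpow_mul_prod, div_le_iff₀ (mul_pos hI hD)]
  refine (integral_gradP_mul_le hp hη hχ hχcs hv hvcs).trans_eq ?_
  unfold rayleigh
  field_simp

end Tensor

section Tube

variable {m : ℕ} {p : ℝ} {ω : Set (E m)}

theorem lam1_mul_integral_le_integral_gradP (hp : 0 < p) {u : ℝ × E m → ℝ}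
    (hu : ContDiff ℝ (⊤ : ℕ∞) u) (hcs : HasCompactSupport u) (hsupp : tsupport u ⊆ tube ω) :
    lam1 p ω * ∫ x, |u x| ^ p ≤ ∫ x, gradP p u x := by
  have hu1 : ContDiff ℝ 1 u := hu.of_le (by simp)
  have hG : Integrable (fun x => |u x| ^ p) (volume.prod volume) :=
    hcs.integrable_abs_rpow hu.continuous hp
  have hF : Integrable (gradP p u) (volume.prod volume) :=
    hcs.integrable_gradP hu1 hp
  rw [Measure.volume_eq_prod, integral_prod _ hG, integral_prod _ hF, ← integral_const_mul]
  refine integral_mono (hG.integral_prod_left.const_mul _) hF.integral_prod_left fun s => ?_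
  have hslice : ContDiff ℝ (⊤ : ℕ∞) (fun t => u (s, t)) := hu.comp (contDiff_prodMk_right s)
  calc lam1 p ω * ∫ t, |u (s, t)| ^ p ≤ ∫ t, ‖fderiv ℝ (fun t' => u (s, t')) t‖ ^ p :=
        lam1_mul_integral_le hp hslice (hcs.comp_prodMk s) (tsupport_comp_prodMk_subset hsupp s)
    _ ≤ ∫ t, gradP p u (s, t) :=
        integral_mono ((hcs.comp_prodMk s).integrable_norm_fderiv_rpow (hslice.of_le (by simp)) hp)
          (((continuous_gradP hp.le hu1).comp (.prodMk_right s)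
            ).integrable_of_hasCompactSupport ((hasCompactSupport_gradP hcs hp.ne').comp_prodMk s))
          fun t => norm_fderiv_slice_rpow_le_gradP hp.le (hu1.differentiable one_ne_zero _)

theorem lam1_le_lam1Prod_tube (hp : 0 < p) (hω : IsOpen ω) (hωne : ω.Nonempty) :
    lam1 p ω ≤ lam1Prod p (tube ω) :=
  le_lam1Prod hp (isOpen_univ.prod hω) (univ_nonempty.prod hωne) fun _ hu hcs hsupp hne =>
    (le_div_iff₀ (integral_abs_rpow_pos hcs hu.continuous hne hp)).2
      (lam1_mul_integral_le_integral_gradP hp hu hcs hsupp)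

theorem lam1Prod_tube_diff_le_weighted (hp : 0 < p) {K : Set (ℝ × E m)} (hK : IsCompact K)
    {v : E m → ℝ} (hv : ContDiff ℝ (⊤ : ℕ∞) v) (hvcs : HasCompactSupport v)
    (hvsupp : tsupport v ⊆ ω) (hv0 : v ≠ 0) {η ε : ℝ} (hη : 0 < η) (hε : 0 < ε) :
    lam1Prod p (tube ω \ K) ≤ (1 + 1 / η) ^ (p / 2) * ε + (1 + η) ^ (p / 2) * rayleigh p v := by
  obtain ⟨R, hR⟩ := (hK.image continuous_fst).bddAbove
  obtain ⟨χ, hχ, hχcs, hχR, hχ0, hχε⟩ := exists_tsupport_subset_Ioi_rayleigh_le hp R hε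
  have hsupp : tsupport (fun x : ℝ × E m => χ x.1 * v x.2) ⊆ tube ω \ K := fun x hx =>
    have hx' := tsupport_mul_prod_subset χ v hx
    ⟨⟨trivial, hvsupp hx'.2⟩, fun hxK => (hR (mem_image_of_mem _ hxK)).not_gt (hχR hx'.1)⟩
  have hu : ContDiff ℝ (⊤ : ℕ∞) (fun x : ℝ × E m => χ x.1 * v x.2) :=
    (hχ.comp contDiff_fst).mul (hv.comp contDiff_snd)
  have hne : (fun x : ℝ × E m => χ x.1 * v x.2) ≠ 0 := by
    obtain ⟨s, hs⟩ := Function.ne_iff.1 hχ0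
    obtain ⟨t, ht⟩ := Function.ne_iff.1 hv0
    exact Function.ne_iff.2 ⟨(s, t), mul_ne_zero hs ht⟩
  calc lam1Prod p (tube ω \ K)
      ≤ (∫ x, gradP p (fun x : ℝ × E m => χ x.1 * v x.2) x) /
          ∫ x : ℝ × E m, |χ x.1 * v x.2| ^ p :=
        lam1Prod_le hp hu (hχcs.mul_prod hvcs) hsupp hne
    _ ≤ (1 + 1 / η) ^ (p / 2) * rayleigh p χ + (1 + η) ^ (p / 2) * rayleigh p v :=
        integral_gradP_mul_div_le hp hη (hχ.of_le (by simp)) hχcs hχ0 (hv.of_le (by simp))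
          hvcs hv0
    _ ≤ _ := by gcongr

theorem lam1Prod_tube_diff_le_rayleigh (hp : 0 < p) {K : Set (ℝ × E m)} (hK : IsCompact K)
    {v : E m → ℝ} (hv : ContDiff ℝ (⊤ : ℕ∞) v) (hvcs : HasCompactSupport v)
    (hvsupp : tsupport v ⊆ ω) (hv0 : v ≠ 0) :
    lam1Prod p (tube ω \ K) ≤ rayleigh p v := by
  have hη (η : ℝ) (hη : 0 < η) : lam1Prod p (tube ω \ K) ≤ (1 + η) ^ (p / 2) * rayleigh p v := by
    have hlim : Tendsto (fun ε => (1 + 1 / η) ^ (p / 2) * ε + (1 + η) ^ (p / 2) * rayleigh p v)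
        (𝓝[>] 0) (𝓝 ((1 + η) ^ (p / 2) * rayleigh p v)) :=
      (((continuous_const.mul continuous_id).add continuous_const).tendsto' 0 _
        (by simp)).mono_left nhdsWithin_le_nhds
    exact ge_of_tendsto hlim (eventually_nhdsWithin_of_forall fun ε hε =>
      lam1Prod_tube_diff_le_weighted hp hK hv hvcs hvsupp hv0 hη hε)
  have hlim : Tendsto (fun η : ℝ => (1 + η) ^ (p / 2) * rayleigh p v) (𝓝[>] 0)
      (𝓝 (rayleigh p v)) :=
    ((((continuous_const.add continuous_id).rpow_const fun _ => Or.inr (by positivity)).mul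
      continuous_const).tendsto' 0 _ (by simp)).mono_left nhdsWithin_le_nhds
  exact ge_of_tendsto hlim (eventually_nhdsWithin_of_forall hη)

theorem lam1Prod_tube_diff_le_lam1 (hp : 0 < p) (hω : IsOpen ω) (hωne : ω.Nonempty)
    {K : Set (ℝ × E m)} (hK : IsCompact K) : lam1Prod p (tube ω \ K) ≤ lam1 p ω :=
  le_lam1 hp hω hωne fun _ hv hvcs hvsupp hv0 =>
    lam1Prod_tube_diff_le_rayleigh hp hK hv hvcs hvsupp hv0

end Tube

theorem stmt_15_general {m : ℕ} (p : ℝ) (hp : 1 < p)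
    (ω : Set (E m)) (hωopen : IsOpen ω) (hωne : ω.Nonempty) :
    sSup {r : ℝ | ∃ K : Set (ℝ × E m), IsCompact K ∧ K ⊆ tube ω ∧
        r = lam1Prod p (tube ω \ K)} = lam1 p ω := by
  have hp0 : 0 < p := zero_lt_one.trans hp
  have hupper : ∀ K : Set (ℝ × E m), IsCompact K → lam1Prod p (tube ω \ K) ≤ lam1 p ω :=
    fun _ hK => lam1Prod_tube_diff_le_lam1 hp0 hωopen hωne hK
  apply le_antisymm
  · refine csSup_le ⟨_, ∅, isCompact_empty, empty_subset _, rfl⟩ ?_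
    rintro r ⟨K, hK, -, rfl⟩
    exact hupper K hK
  · refine le_csSup_of_le ⟨lam1 p ω, ?_⟩ ⟨∅, isCompact_empty, empty_subset _, rfl⟩ ?_
    · rintro r ⟨K, hK, -, rfl⟩
      exact hupper K hK
    · rw [sdiff_empty]
      exact lam1_le_lam1Prod_tube hp0 hωopen hωne

/-- The essential spectral threshold of the straight tube `Ω₀ = ℝ × ω`, defined as
`sup_{K compact ⊆ Ω₀} λ₁(Ω₀ \ K)`, equals the spectral threshold of the
cross-section `ω`. -/
theorem stmt_15 {m : ℕ} (hm : 1 ≤ m) (p : ℝ) (hp : 1 < p)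
    (ω : Set (E m)) (hωopen : IsOpen ω) (hωne : ω.Nonempty)
    (hωbdd : Bornology.IsBounded ω) (hωconn : IsConnected ω) :
    sSup {r : ℝ | ∃ K : Set (ℝ × E m), IsCompact K ∧ K ⊆ tube ω ∧
        r = lam1Prod p (tube ω \ K)} = lam1 p ω :=
  stmt_15_general p hp ω hωopen hωne
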